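/- Let G be a complete multipartite graph whose vertex set is partitioned into nonempty parts, with σ parts of size 1 (small parts) and λ parts of size at least 2 (large parts), where λ ≥ 2. Then the nim-number of the achievement game is nim(GEN(G)) = 2·(σ mod 2) if λ is even, and nim(GEN(G)) = σ mod 2 if λ is odd. -/
import Mathlib
set_option linter.unusedSectionVars false
set_option maxHeartbeats 1000000


open SimpleGraph

variable {V : Type*}

/-- `w` lies on a geodesic (shortest path) between `u` and `v` in `G`. -/
def OnGeodesic (G : SimpleGraph V) (u v w : V) : Prop :=
  ∃ p : G.Walk u v, p.IsPath ∧ p.length = G.dist u v ∧ w ∈ p.support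

/-- A set of vertices is geodetically convex if it contains every vertex lying on a
geodesic between two of its elements. -/
def GeoConvex (G : SimpleGraph V) (S : Set V) : Prop :=
  ∀ ⦃u⦄, u ∈ S → ∀ ⦃v⦄, v ∈ S → ∀ ⦃w⦄, OnGeodesic G u v w → w ∈ S

/-- The geodetic convex hull of a set of vertices: the smallest geodetically convex
set containing it. -/
def geoHull (G : SimpleGraph V) (S : Set V) : Set V :=
  ⋂₀ {K : Set V | S ⊆ K ∧ GeoConvex G K}

/-- A set of vertices is generating if its convex hull is the whole vertex set. -/
def GeoGenerates (G : SimpleGraph V) (S : Set V) : Prop :=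
  geoHull G S = Set.univ

/-- A maximal nongenerating set: a nongenerating set not properly contained in any
nongenerating set.  The family of these is `𝒩(G)`. -/
def MaxNongen (G : SimpleGraph V) (N : Set V) : Prop :=
  ¬ GeoGenerates G N ∧ ∀ M : Set V, ¬ GeoGenerates G M → N ⊆ M → N = M

/-- The Frattini subset `Φ(G)`: the intersection of all maximal nongenerating sets. -/
def geoFrattini (G : SimpleGraph V) : Set V :=
  ⋂₀ {N : Set V | MaxNongen G N}

/-- A vertex is simplicial if its neighbors induce a complete graph. -/
def Simplicial (G : SimpleGraph V) (v : V) : Prop :=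
  ∀ ⦃u w : V⦄, G.Adj v u → G.Adj v w → u ≠ w → G.Adj u w

/-- A minimal generating set: a generating set no proper subset of which generates.
The family of these is `𝒢(G)`. -/
def MinGen (G : SimpleGraph V) (L : Set V) : Prop :=
  GeoGenerates G L ∧ ∀ M : Set V, GeoGenerates G M → M ⊆ L → M = L

/-- The minimum excludant of a set of natural numbers. -/
noncomputable def natMex (A : Set ℕ) : ℕ := sInf {n : ℕ | n ∉ A}

variable [Fintype V] [DecidableEq V]

/-- Nim-value of a position `P` of the avoidance game `DNG(G)`, computed with fuel:
the options of a position `P` are the sets `insert v P` with `v ∉ P` that are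
nongenerating, and the value is the minimum excludant of the values of the options.
The fuel (first argument) tracks the number of unselected vertices, so it never
runs out along actual plays. -/
noncomputable def dngAux (G : SimpleGraph V) : ℕ → Finset V → ℕ
  | 0, _ => 0
  | k + 1, P => natMex {m : ℕ | ∃ v : V, v ∉ P ∧
      ¬ GeoGenerates G (↑(insert v P) : Set V) ∧ m = dngAux G k (insert v P)}

/-- The nim-number of the avoidance game `DNG(G)`: the nim-value of the starting
position `∅`. -/
noncomputable def dngNim (G : SimpleGraph V) : ℕ := dngAux G (Fintype.card V) ∅

open scoped Classical in
/-- Nim-value of a position `P` of the achievement game `GEN(G)`, computed with fuel: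
generating positions are terminal (value `0 = mex ∅`), and the options of a
nongenerating position `P` are all sets `insert v P` with `v ∉ P`. -/
noncomputable def genAux (G : SimpleGraph V) : ℕ → Finset V → ℕ
  | 0, _ => 0
  | k + 1, P =>
      if GeoGenerates G (↑P : Set V) then 0
      else natMex {m : ℕ | ∃ v : V, v ∉ P ∧ m = genAux G k (insert v P)}

/-- The nim-number of the achievement game `GEN(G)`: the nim-value of the starting
position `∅`. -/
noncomputable def genNim (G : SimpleGraph V) : ℕ := genAux G (Fintype.card V) ∅


/-! ### Auxiliary lemmas -/

section AuxBasic

lemma natMex_eq {A : Set ℕ} {n : ℕ} (hn : n ∉ A) (h : ∀ m < n, m ∈ A) : natMex A = n := by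
  have h1 : n ∈ {k : ℕ | k ∉ A} := hn
  refine le_antisymm (Nat.sInf_le h1) (le_csInf ⟨n, h1⟩ ?_)
  intro k hk
  by_contra hlt
  exact hk (h k (by omega))

lemma walk_support_of_length_zero {α : Type*} {G : SimpleGraph α} {u v : α} (p : G.Walk u v)
    (h : p.length = 0) : p.support = [u] := by
  cases p with
  | nil => rfl
  | cons ha q => simp at h

lemma walk_support_of_length_one {α : Type*} {G : SimpleGraph α} {u v : α} (p : G.Walk u v)
    (h : p.length = 1) : p.support = [u, v] := by
  cases p with
  | nil => simp at h
  | cons ha q =>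
    cases q with
    | nil => rfl
    | cons hb r => simp [SimpleGraph.Walk.length_cons] at h

lemma subset_geoHull {α : Type*} (G : SimpleGraph α) (S : Set α) : S ⊆ geoHull G S :=
  fun _ hx => Set.mem_sInter.2 fun _ hK => hK.1 hx

lemma geoConvex_geoHull {α : Type*} (G : SimpleGraph α) (S : Set α) : GeoConvex G (geoHull G S) := by
  intro u hu v hv w hw
  refine Set.mem_sInter.2 fun K hK => ?_
  exact hK.2 (Set.mem_sInter.1 hu K hK) (Set.mem_sInter.1 hv K hK) hw

lemma geoHull_subset_of_geoConvex {α : Type*} {G : SimpleGraph α} {S : Set α} (hS : GeoConvex G S) :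
    geoHull G S ⊆ S :=
  fun _ hx => Set.mem_sInter.1 hx S ⟨subset_rfl, hS⟩

end AuxBasic

section CMG

variable {ι : Type*} {W : ι → Type*}

lemma cmg_adj {a b : Σ i, W i} : (completeMultipartiteGraph W).Adj a b ↔ a.1 ≠ b.1 :=
  Iff.rfl

lemma cmg_dist_same {i : ι} {u v : W i} (huv : u ≠ v) {j : ι} (hj : j ≠ i) (x : W j) :
    (completeMultipartiteGraph W).dist ⟨i, u⟩ ⟨i, v⟩ = 2 := by
  have h1 : (completeMultipartiteGraph W).Adj ⟨i, u⟩ ⟨j, x⟩ := fun h => hj h.symm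
  have h2 : (completeMultipartiteGraph W).Adj ⟨j, x⟩ ⟨i, v⟩ := hj
  set G := completeMultipartiteGraph W with hG
  let p : G.Walk (⟨i, u⟩ : Σ i, W i) ⟨i, v⟩ :=
    SimpleGraph.Walk.cons h1 (SimpleGraph.Walk.cons h2 SimpleGraph.Walk.nil)
  have hle : G.dist ⟨i, u⟩ ⟨i, v⟩ ≤ 2 := by
    have := SimpleGraph.dist_le p
    simpa [p] using this
  have hne : (⟨i, u⟩ : Σ i, W i) ≠ ⟨i, v⟩ := by
    intro h
    exact huv (eq_of_heq (Sigma.mk.inj_iff.1 h).2)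
  have h0 : G.dist ⟨i, u⟩ ⟨i, v⟩ ≠ 0 := by
    intro h
    exact hne (p.reachable.dist_eq_zero_iff.1 h)
  have hno1 : G.dist ⟨i, u⟩ ⟨i, v⟩ ≠ 1 := by
    intro h
    exact (SimpleGraph.dist_eq_one_iff_adj.1 h) rfl
  omega

lemma cmg_mem_of_pair {K : Set (Σ i, W i)} (hK : GeoConvex (completeMultipartiteGraph W) K)
    {i : ι} {u v : W i} (huv : u ≠ v) (hu : (⟨i, u⟩ : Σ i, W i) ∈ K)
    (hv : (⟨i, v⟩ : Σ i, W i) ∈ K) {j : ι} (hj : j ≠ i) (x : W j) :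
    (⟨j, x⟩ : Σ i, W i) ∈ K := by
  have h1 : (completeMultipartiteGraph W).Adj ⟨i, u⟩ ⟨j, x⟩ := fun h => hj h.symm
  have h2 : (completeMultipartiteGraph W).Adj ⟨j, x⟩ ⟨i, v⟩ := hj
  refine hK hu hv ⟨SimpleGraph.Walk.cons h1 (SimpleGraph.Walk.cons h2 SimpleGraph.Walk.nil),
    ?_, ?_, ?_⟩
  · have hne : (⟨i, u⟩ : Σ i, W i) ≠ ⟨i, v⟩ := by
      intro h
      exact huv (eq_of_heq (Sigma.mk.inj_iff.1 h).2)
    simp [SimpleGraph.Walk.isPath_def, hne, h1.ne, h2.ne]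
  · rw [cmg_dist_same huv hj x]
    simp
  · simp

variable [∀ i, Fintype (W i)]

lemma cmg_generates_iff
    (htwo : ∃ i j : ι, i ≠ j ∧ 2 ≤ Fintype.card (W i) ∧ 2 ≤ Fintype.card (W j))
    (S : Set (Σ i, W i)) :
    GeoGenerates (completeMultipartiteGraph W) S ↔
      ∃ (i : ι) (u v : W i), u ≠ v ∧ (⟨i, u⟩ : Σ i, W i) ∈ S ∧ (⟨i, v⟩ : Σ i, W i) ∈ S := by
  obtain ⟨p, q, hpq, hp, hq⟩ := htwo
  constructor
  · intro hgen
    by_contra hno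
    push_neg at hno
    -- S is convex
    have hconv : GeoConvex (completeMultipartiteGraph W) S := by
      rintro a ha b hb w ⟨pth, hpath, hlen, hsupp⟩
      by_cases hab : a = b
      · subst hab
        rw [SimpleGraph.dist_self] at hlen
        rw [walk_support_of_length_zero pth hlen] at hsupp
        simp only [List.mem_singleton] at hsupp
        subst hsupp; exact ha
      · obtain ⟨ia, xa⟩ := a
        obtain ⟨ib, xb⟩ := b
        by_cases hfst : ia = ib
        · subst hfst
          have hxy : xa ≠ xb := by
            intro h; exact hab (by rw [h])
          exact absurd hb (hno ia xa xb hxy ha)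
        · have hadj : (completeMultipartiteGraph W).Adj ⟨ia, xa⟩ ⟨ib, xb⟩ := hfst
          rw [SimpleGraph.dist_eq_one_iff_adj.2 hadj] at hlen
          rw [walk_support_of_length_one pth hlen] at hsupp
          simp only [List.mem_cons, List.mem_singleton, List.not_mem_nil, or_false] at hsupp
          rcases hsupp with rfl | rfl
          · exact ha
          · exact hb
    have hsub : geoHull (completeMultipartiteGraph W) S ⊆ S :=
      geoHull_subset_of_geoConvex hconv
    have hgen' : geoHull (completeMultipartiteGraph W) S = Set.univ := hgen
    rw [hgen'] at hsub
    obtain ⟨x, y, hxy⟩ := Fintype.exists_pair_of_one_lt_card (α := W p) (by omega)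
    exact absurd (hsub trivial) (hno p x y hxy (hsub trivial))
  · rintro ⟨i, u, v, huv, hu, hv⟩
    have hhull := geoConvex_geoHull (completeMultipartiteGraph W) S
    have hu' := subset_geoHull (completeMultipartiteGraph W) S hu
    have hv' := subset_geoHull (completeMultipartiteGraph W) S hv
    -- every vertex outside part i is in the hull
    have hstep1 : ∀ (j : ι) (x : W j), j ≠ i →
        (⟨j, x⟩ : Σ i, W i) ∈ geoHull (completeMultipartiteGraph W) S := by
      intro j x hj
      exact cmg_mem_of_pair hhull huv hu' hv' hj x
    -- pick a big part different from i
    obtain ⟨j, hji, hjbig⟩ : ∃ j : ι, j ≠ i ∧ 2 ≤ Fintype.card (W j) := by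
      by_cases hpi : p = i
      · exact ⟨q, by rw [← hpi]; exact fun h => hpq h.symm, hq⟩
      · exact ⟨p, hpi, hp⟩
    obtain ⟨x, y, hxy⟩ := Fintype.exists_pair_of_one_lt_card (α := W j) (by omega)
    have hx := hstep1 j x hji
    have hy := hstep1 j y hji
    have hstep2 : ∀ (k : ι) (z : W k), k ≠ j →
        (⟨k, z⟩ : Σ i, W i) ∈ geoHull (completeMultipartiteGraph W) S := by
      intro k z hk
      exact cmg_mem_of_pair hhull hxy hx hy hk z
    show geoHull (completeMultipartiteGraph W) S = Set.univ
    refine Set.eq_univ_of_forall ?_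
    rintro ⟨a, z⟩
    by_cases haj : a = j
    · exact hstep1 a z (by rw [haj]; exact hji)
    · exact hstep2 a z haj

end CMG


section Game

open Finset
open scoped Classical

variable {ι : Type*} [Fintype ι] (W : ι → Type*) [∀ i, Fintype (W i)] [∀ i, Nonempty (W i)]
  [DecidableEq (Σ i, W i)]

/-- Untouched small parts. -/
noncomputable def partsA (P : Finset (Σ i, W i)) : Finset ι :=
  Finset.univ.filter fun i => Fintype.card (W i) = 1 ∧ ∀ u : W i, (⟨i, u⟩ : Σ i, W i) ∉ P

/-- Untouched large parts. -/
noncomputable def partsB (P : Finset (Σ i, W i)) : Finset ι :=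
  Finset.univ.filter fun i => 2 ≤ Fintype.card (W i) ∧ ∀ u : W i, (⟨i, u⟩ : Σ i, W i) ∉ P

/-- Positions with at most one vertex per part. -/
def GoodP (P : Finset (Σ i, W i)) : Prop :=
  ∀ (i : ι) (u v : W i), (⟨i, u⟩ : Σ i, W i) ∈ P → (⟨i, v⟩ : Σ i, W i) ∈ P → u = v

/-- The abstract nim-value function. -/
def fval (l a b : ℕ) : ℕ :=
  if b = l then (if a % 2 = 0 then 0 else if l % 2 = 0 then 2 else 1)
  else if (a + b) % 2 = 0 then 1 else 2

lemma fval_le_two (l a b : ℕ) : fval l a b ≤ 2 := by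
  simp only [fval]; split_ifs <;> omega

lemma fval_ne_sub_a {l a b : ℕ} (hb : b ≤ l) (ha : 0 < a) : fval l (a - 1) b ≠ fval l a b := by
  simp only [fval]; split_ifs <;> omega

lemma fval_ne_sub_b {l a b : ℕ} (h2 : 2 ≤ l) (hb : b ≤ l) (hbpos : 0 < b) :
    fval l a (b - 1) ≠ fval l a b := by
  simp only [fval]; split_ifs <;> omega

lemma fval_ne_zero_of_lt {l a b : ℕ} (hb : b < l) : fval l a b ≠ 0 := by
  simp only [fval]; split_ifs <;> omega

lemma fval_pos_top {l a : ℕ} (h : 0 < fval l a l) : a % 2 = 1 := by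
  simp only [fval] at h; split_ifs at h <;> omega

lemma fval_aodd_zero {l a : ℕ} (ha : a % 2 = 1) : fval l (a - 1) l = 0 := by
  simp only [fval]; split_ifs <;> omega

lemma fval_two_top {l a : ℕ} (h : fval l a l = 2) : a % 2 = 1 ∧ l % 2 = 0 := by
  simp only [fval] at h; split_ifs at h <;> omega

lemma fval_top_sub {l a : ℕ} (h2 : 2 ≤ l) (ha : a % 2 = 1) (hle : l % 2 = 0) :
    fval l a (l - 1) = 1 := by
  simp only [fval]; split_ifs <;> omega

lemma fval_two_lt {l a b : ℕ} (hb : b ≠ l) (h : fval l a b = 2) : (a + b) % 2 = 1 := by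
  simp only [fval] at h; split_ifs at h <;> omega

lemma fval_one_subA {l a b : ℕ} (hb : b ≠ l) (hab : (a + b) % 2 = 1) (ha : 0 < a) :
    fval l (a - 1) b = 1 := by
  simp only [fval]; split_ifs <;> omega

lemma fval_one_subB {l a b : ℕ} (hb : b ≠ l) (hble : b ≤ l) (hab : (a + b) % 2 = 1)
    (hb0 : 0 < b) : fval l a (b - 1) = 1 := by
  simp only [fval]; split_ifs <;> omega

lemma partsA_insert (P : Finset (Σ i, W i)) (i : ι) (u : W i) :
    partsA W (insert ⟨i, u⟩ P) = (partsA W P).erase i := by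
  ext j
  simp only [partsA, mem_filter, mem_erase, mem_univ, true_and, Finset.mem_insert]
  constructor
  · rintro ⟨h1, h2⟩
    refine ⟨fun hji => ?_, h1, fun w hw => h2 w (Or.inr hw)⟩
    subst hji
    exact h2 u (Or.inl rfl)
  · rintro ⟨hji, h1, h2⟩
    refine ⟨h1, fun w hw => ?_⟩
    rcases hw with hw | hw
    · exact hji (congrArg Sigma.fst hw)
    · exact h2 w hw

lemma partsB_insert (P : Finset (Σ i, W i)) (i : ι) (u : W i) :
    partsB W (insert ⟨i, u⟩ P) = (partsB W P).erase i := by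
  ext j
  simp only [partsB, mem_filter, mem_erase, mem_univ, true_and, Finset.mem_insert]
  constructor
  · rintro ⟨h1, h2⟩
    refine ⟨fun hji => ?_, h1, fun w hw => h2 w (Or.inr hw)⟩
    subst hji
    exact h2 u (Or.inl rfl)
  · rintro ⟨hji, h1, h2⟩
    refine ⟨h1, fun w hw => ?_⟩
    rcases hw with hw | hw
    · exact hji (congrArg Sigma.fst hw)
    · exact h2 w hw

lemma goodP_insert {P : Finset (Σ i, W i)} (hP : GoodP W P) {i : ι} {u : W i}
    (hunt : ∀ w : W i, (⟨i, w⟩ : Σ i, W i) ∉ P) : GoodP W (insert ⟨i, u⟩ P) := by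
  intro j x y hx hy
  rw [Finset.mem_insert] at hx hy
  rcases hx with hx | hx <;> rcases hy with hy | hy
  · obtain ⟨rfl, hx2⟩ := Sigma.mk.inj_iff.1 hx
    obtain ⟨-, hy2⟩ := Sigma.mk.inj_iff.1 hy
    exact (eq_of_heq hx2).trans (eq_of_heq hy2).symm
  · obtain ⟨rfl, -⟩ := Sigma.mk.inj_iff.1 hx
    exact absurd hy (hunt y)
  · obtain ⟨rfl, -⟩ := Sigma.mk.inj_iff.1 hy
    exact absurd hx (hunt x)
  · exact hP j x y hx hy

lemma not_gen_of_goodP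
    (htwo : ∃ i j : ι, i ≠ j ∧ 2 ≤ Fintype.card (W i) ∧ 2 ≤ Fintype.card (W j))
    {P : Finset (Σ i, W i)} (hP : GoodP W P) :
    ¬ GeoGenerates (completeMultipartiteGraph W) (↑P : Set (Σ i, W i)) := by
  rw [cmg_generates_iff htwo]
  rintro ⟨i, u, v, huv, hu, hv⟩
  exact huv (hP i u v (by exact_mod_cast hu) (by exact_mod_cast hv))

lemma genAux_of_gen {α : Type*} [Fintype α] [DecidableEq α] {G : SimpleGraph α} {P : Finset α}
    (h : GeoGenerates G (↑P : Set α)) : ∀ k, genAux G k P = 0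
  | 0 => rfl
  | (k + 1) => by rw [genAux, if_pos h]

lemma genAux_eq
    (htwo : ∃ i j : ι, i ≠ j ∧ 2 ≤ Fintype.card (W i) ∧ 2 ≤ Fintype.card (W j))
    (l : ℕ) (hl : l = (Finset.univ.filter fun i : ι => 2 ≤ Fintype.card (W i)).card)
    (h2 : 2 ≤ l) :
    ∀ (k : ℕ) (P : Finset (Σ i, W i)), GoodP W P →
      Fintype.card (Σ i, W i) ≤ k + P.card →
      genAux (completeMultipartiteGraph W) k P
        = fval l (partsA W P).card (partsB W P).card := by
  intro k
  induction k with
  | zero =>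
    intro P hP hcard
    exfalso
    have hPu : P = Finset.univ := by
      apply Finset.eq_univ_of_card
      have := Finset.card_le_univ P
      omega
    obtain ⟨p, q, hpq, hp, hq⟩ := htwo
    obtain ⟨x, y, hxy⟩ := Fintype.exists_pair_of_one_lt_card (α := W p) (by omega)
    exact hxy (hP p x y (hPu ▸ Finset.mem_univ _) (hPu ▸ Finset.mem_univ _))
  | succ k ih =>
    intro P hP hcard
    set G := completeMultipartiteGraph W with hG
    have hng : ¬ GeoGenerates G (↑P : Set (Σ i, W i)) := not_gen_of_goodP W htwo hP
    set a := (partsA W P).card with ha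
    set b := (partsB W P).card with hb
    have hbl : b ≤ l := by
      rw [hb, hl]
      apply Finset.card_le_card
      intro j hj
      simp only [partsB, mem_filter, mem_univ, true_and] at hj ⊢
      exact hj.1
    -- classification of options
    have hopt : ∀ v : (Σ i, W i), v ∉ P →
        (genAux G k (insert v P) = 0 ∧ b < l) ∨
        (genAux G k (insert v P) = fval l (a - 1) b ∧ 0 < a) ∨
        (genAux G k (insert v P) = fval l a (b - 1) ∧ 0 < b) := by
      rintro ⟨i, u⟩ hv
      have hfuel : Fintype.card (Σ i, W i) ≤ k + (insert (⟨i, u⟩ : Σ i, W i) P).card := by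
        rw [Finset.card_insert_of_notMem hv]; omega
      by_cases htouch : ∀ w : W i, (⟨i, w⟩ : Σ i, W i) ∉ P
      · -- moving into an untouched part
        have hgood := goodP_insert W hP (u := u) htouch
        have hval := ih (insert ⟨i, u⟩ P) hgood hfuel
        have hcardW : 1 ≤ Fintype.card (W i) := Fintype.card_pos
        by_cases hsmall : Fintype.card (W i) = 1
        · right; left
          have hiA : i ∈ partsA W P := by
            simp only [partsA, mem_filter, mem_univ, true_and]
            exact ⟨hsmall, htouch⟩
          have hiB : i ∉ partsB W P := by
            simp only [partsB, mem_filter, mem_univ, true_and, not_and]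
            intro h; omega
          rw [partsA_insert, partsB_insert, Finset.card_erase_of_mem hiA,
            Finset.erase_eq_of_notMem hiB] at hval
          exact ⟨hval, Finset.card_pos.2 ⟨i, hiA⟩⟩
        · right; right
          have hlarge : 2 ≤ Fintype.card (W i) := by omega
          have hiB : i ∈ partsB W P := by
            simp only [partsB, mem_filter, mem_univ, true_and]
            exact ⟨hlarge, htouch⟩
          have hiA : i ∉ partsA W P := by
            simp only [partsA, mem_filter, mem_univ, true_and, not_and]
            intro h; omega
          rw [partsA_insert, partsB_insert, Finset.card_erase_of_mem hiB,
            Finset.erase_eq_of_notMem hiA] at hval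
          exact ⟨hval, Finset.card_pos.2 ⟨i, hiB⟩⟩
      · -- moving into a touched part: winning move
        push_neg at htouch
        obtain ⟨w, hw⟩ := htouch
        have huw : u ≠ w := by
          intro h; subst h; exact hv hw
        left
        constructor
        · apply genAux_of_gen
          rw [cmg_generates_iff htwo]
          exact ⟨i, u, w, huw, by simp, by simp [hw]⟩
        · have hlarge : 2 ≤ Fintype.card (W i) := Fintype.one_lt_card_iff.2 ⟨u, w, huw⟩
          rw [hb, hl]
          apply Finset.card_lt_card
          rw [Finset.ssubset_iff_of_subset]
          · refine ⟨i, ?_, ?_⟩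
            · simp only [mem_filter, mem_univ, true_and]; exact hlarge
            · simp only [partsB, mem_filter, mem_univ, true_and, not_and]
              intro _ h
              exact h w hw
          · intro j hj
            simp only [partsB, mem_filter, mem_univ, true_and] at hj ⊢
            exact hj.1
    -- witnesses
    have hwinner : b < l → ∃ v : (Σ i, W i), v ∉ P ∧ genAux G k (insert v P) = 0 := by
      intro hblt
      have hss : partsB W P ⊂ Finset.univ.filter fun i : ι => 2 ≤ Fintype.card (W i) := by
        refine ssubset_of_subset_of_ne ?_ ?_
        · intro j hj
          simp only [partsB, mem_filter, mem_univ, true_and] at hj ⊢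
          exact hj.1
        · intro h
          rw [hb, h, ← hl] at hblt
          omega
      obtain ⟨i, hiL, hiB⟩ := Finset.exists_of_ssubset hss
      simp only [mem_filter, mem_univ, true_and] at hiL
      simp only [partsB, mem_filter, mem_univ, true_and, not_and] at hiB
      have := hiB hiL
      push_neg at this
      obtain ⟨w, hw⟩ := this
      obtain ⟨u, huw⟩ := Fintype.exists_ne_of_one_lt_card (by omega : 1 < Fintype.card (W i)) w
      have hv : (⟨i, u⟩ : Σ i, W i) ∉ P := by
        intro h
        exact huw (hP i u w h hw)
      refine ⟨⟨i, u⟩, hv, ?_⟩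
      apply genAux_of_gen
      rw [cmg_generates_iff htwo]
      exact ⟨i, u, w, huw, by simp, by simp [hw]⟩
    have hmoveA : 0 < a → ∃ v : (Σ i, W i), v ∉ P ∧
        genAux G k (insert v P) = fval l (a - 1) b := by
      intro hapos
      obtain ⟨i, hiA⟩ := Finset.card_pos.1 (ha ▸ hapos)
      have hiA' := hiA
      simp only [partsA, mem_filter, mem_univ, true_and] at hiA'
      obtain ⟨hsmall, htouch⟩ := hiA'
      obtain ⟨u⟩ := ‹∀ i, Nonempty (W i)› i
      have hv : (⟨i, u⟩ : Σ i, W i) ∉ P := htouch u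
      have hfuel : Fintype.card (Σ i, W i) ≤ k + (insert (⟨i, u⟩ : Σ i, W i) P).card := by
        rw [Finset.card_insert_of_notMem hv]; omega
      have hval := ih (insert ⟨i, u⟩ P) (goodP_insert W hP htouch) hfuel
      have hiB : i ∉ partsB W P := by
        simp only [partsB, mem_filter, mem_univ, true_and, not_and]
        intro h; omega
      rw [partsA_insert, partsB_insert, Finset.card_erase_of_mem hiA,
        Finset.erase_eq_of_notMem hiB] at hval
      exact ⟨⟨i, u⟩, hv, hval⟩
    have hmoveB : 0 < b → ∃ v : (Σ i, W i), v ∉ P ∧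
        genAux G k (insert v P) = fval l a (b - 1) := by
      intro hbpos
      obtain ⟨i, hiB⟩ := Finset.card_pos.1 (hb ▸ hbpos)
      have hiB' := hiB
      simp only [partsB, mem_filter, mem_univ, true_and] at hiB'
      obtain ⟨hlarge, htouch⟩ := hiB'
      obtain ⟨u⟩ := ‹∀ i, Nonempty (W i)› i
      have hv : (⟨i, u⟩ : Σ i, W i) ∉ P := htouch u
      have hfuel : Fintype.card (Σ i, W i) ≤ k + (insert (⟨i, u⟩ : Σ i, W i) P).card := by
        rw [Finset.card_insert_of_notMem hv]; omega
      have hval := ih (insert ⟨i, u⟩ P) (goodP_insert W hP htouch) hfuel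
      have hiA : i ∉ partsA W P := by
        simp only [partsA, mem_filter, mem_univ, true_and, not_and]
        intro h; omega
      rw [partsA_insert, partsB_insert, Finset.card_erase_of_mem hiB,
        Finset.erase_eq_of_notMem hiA] at hval
      exact ⟨⟨i, u⟩, hv, hval⟩
    -- unfold genAux and compute the mex
    rw [genAux, if_neg hng]
    apply natMex_eq
    · rintro ⟨v, hv, hm⟩
      rcases hopt v hv with ⟨h0, hlt⟩ | ⟨h0, hpos⟩ | ⟨h0, hpos⟩
      · exact fval_ne_zero_of_lt hlt (hm.trans h0)
      · exact fval_ne_sub_a hbl hpos (hm.trans h0).symm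
      · exact fval_ne_sub_b h2 hbl hpos (hm.trans h0).symm
    · intro m hm
      have hle2 : fval l a b ≤ 2 := fval_le_two l a b
      have hm2 : m < 2 := lt_of_lt_of_le hm hle2
      have hmem0 : 0 < fval l a b → (0 : ℕ) ∈
          {m : ℕ | ∃ v : (Σ i, W i), v ∉ P ∧ m = genAux G k (insert v P)} := by
        intro hpos
        by_cases hbeq : b = l
        · rw [hbeq] at hpos
          have haodd : a % 2 = 1 := fval_pos_top hpos
          obtain ⟨v, hv, hval⟩ := hmoveA (by omega)
          refine ⟨v, hv, ?_⟩
          rw [hval, hbeq]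
          exact (fval_aodd_zero haodd).symm
        · obtain ⟨v, hv, hval⟩ := hwinner (lt_of_le_of_ne hbl hbeq)
          exact ⟨v, hv, hval.symm⟩
      have hmem1 : fval l a b = 2 → (1 : ℕ) ∈
          {m : ℕ | ∃ v : (Σ i, W i), v ∉ P ∧ m = genAux G k (insert v P)} := by
        intro h2'
        by_cases hbeq : b = l
        · rw [hbeq] at h2'
          obtain ⟨haodd, hleven⟩ := fval_two_top h2'
          obtain ⟨v, hv, hval⟩ := hmoveB (by omega)
          refine ⟨v, hv, ?_⟩
          rw [hval, hbeq]
          exact (fval_top_sub h2 haodd hleven).symm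
        · have hodd : (a + b) % 2 = 1 := fval_two_lt hbeq h2'
          by_cases hapos : 0 < a
          · obtain ⟨v, hv, hval⟩ := hmoveA hapos
            refine ⟨v, hv, ?_⟩
            rw [hval]
            exact (fval_one_subA hbeq hodd hapos).symm
          · obtain ⟨v, hv, hval⟩ := hmoveB (by omega)
            refine ⟨v, hv, ?_⟩
            rw [hval]
            exact (fval_one_subB hbeq hbl hodd (by omega)).symm
      interval_cases m
      · exact hmem0 (by omega)
      · exact hmem1 (by omega)

end Game

/-- For a complete multipartite graph with `σ` parts of size `1` and
`λ ≥ 2` parts of size at least `2`, the nim-number of the achievement game is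
`2·(σ mod 2)` if `λ` is even, and `σ mod 2` if `λ` is odd. -/
theorem genNim_completeMultipartite {ι : Type*} [Fintype ι] (W : ι → Type*)
    [∀ i, Fintype (W i)] [∀ i, Nonempty (W i)] [DecidableEq (Σ i, W i)]
    (s l : ℕ)
    (hs : s = Fintype.card {i : ι // Fintype.card (W i) = 1})
    (hl : l = Fintype.card {i : ι // 2 ≤ Fintype.card (W i)})
    (h2 : 2 ≤ l) :
    genNim (completeMultipartiteGraph W) =
      if l % 2 = 0 then 2 * (s % 2) else s % 2 := by
  classical
  have hcard2 : 1 < Fintype.card {i : ι // 2 ≤ Fintype.card (W i)} := by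
    rw [← hl]; omega
  have htwo : ∃ i j : ι, i ≠ j ∧ 2 ≤ Fintype.card (W i) ∧ 2 ≤ Fintype.card (W j) := by
    obtain ⟨x, y, hxy⟩ := Fintype.exists_pair_of_one_lt_card hcard2
    exact ⟨x.1, y.1, fun h => hxy (Subtype.ext h), x.2, y.2⟩
  have hl' : l = (Finset.univ.filter fun i : ι => 2 ≤ Fintype.card (W i)).card := by
    rw [hl, Fintype.card_subtype]
  have hgood : GoodP W (∅ : Finset (Σ i, W i)) := by
    intro i u v h hv
    simp at h
  have key := genAux_eq W htwo l hl' h2 (Fintype.card (Σ i, W i)) ∅ hgood (by simp)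
  rw [genNim, key]
  have hA : (partsA W (∅ : Finset (Σ i, W i))).card = s := by
    rw [hs, Fintype.card_subtype]
    congr 1
    ext i
    simp [partsA]
  have hB : (partsB W (∅ : Finset (Σ i, W i))).card = l := by
    rw [hl, Fintype.card_subtype]
    congr 1
    ext i
    simp [partsB]
  rw [hA, hB]
  simp only [fval, if_pos rfl]
  split_ifs <;> omega
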